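/- Write [X,Y]_q = X∘Y − q·Y∘X. For every n ∈ ℤ and every integer k ≥ 0, the following two operator identities hold on K: (1 − q)·t·( 𝓜_{n+4k,n} − 𝓜_{n+2k,n+2k} ) = Σ_{ℓ=0}^{k−1} ( [𝓜_{n+2ℓ}, 𝓜_{n+4k−2ℓ}]_q + [𝓜_{n+4k−1−2ℓ}, 𝓜_{n+2ℓ+1}]_q ), and (1 − q)·t·( 𝓜_{n+4k+2,n} + 𝓜_{n+2k+1,n+2k+1} ) = Σ_{ℓ=0}^{k} ( [𝓜_{n+2ℓ}, 𝓜_{n+4k+2−2ℓ}]_q + [𝓜_{n+4k+1−2ℓ}, 𝓜_{n+2ℓ+1}]_q ). -/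

import Mathlib

/-!
Expand a product of two Macdonald operators as `𝓜_a 𝓜_b f = Σ_{i,j} cᵢⱼ ΓᵢΓⱼ f`. In
`[𝓜_a, 𝓜_b]_q + [𝓜_{b-1}, 𝓜_{a+1}]_q` the diagonal terms `i = j` cancel, because there
`Γᵢ` only rescales `xᵢ` and the four products differ by powers of `q` alone. Since `Γᵢ`
and `Γⱼ` commute, the terms `(i, j)` and `(j, i)` can be merged, and a two-variable
rational-function identity turns their sum into `(1 - q) t (s_{b,a} - s_{b-2,a+2})(xᵢ, xⱼ)`
times the coefficient of `ΓᵢΓⱼ` in `𝓜_{·,·}`. So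
`[𝓜_a, 𝓜_b]_q + [𝓜_{b-1}, 𝓜_{a+1}]_q = (1 - q) t (𝓜_{b,a} - 𝓜_{b-2,a+2})`,
and summing this over `a = n + 2ℓ`, `b = m - 2ℓ` telescopes. In the second identity the
leftover term is turned around by `s_{a,b} = -s_{b-1,a+1}`.
-/

open scoped BigOperators

noncomputable section

/-- The field `F(x₁,…,x_N)` of rational functions in `N` variables over `F`. -/
abbrev RatF (F : Type) [Field F] (N : ℕ) : Type :=
  FractionRing (MvPolynomial (Fin N) F)

/-- The variable `xᵢ` viewed inside the rational function field. -/
noncomputable def Xv (F : Type) [Field F] (N : ℕ) (i : Fin N) : RatF F N :=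
  algebraMap (MvPolynomial (Fin N) F) (RatF F N) (MvPolynomial.X i)

/-- The generalized Macdonald operator `𝓜ₙ`:
`𝓜ₙ f = Σᵢ xᵢⁿ · (Πⱼ≠ᵢ (t·xᵢ − xⱼ)/(xᵢ − xⱼ)) · Γᵢ(f)`. -/
noncomputable def Mac (F : Type) [Field F] (N : ℕ) (t : F)
    (Γ : Fin N → (RatF F N ≃ₐ[F] RatF F N)) (n : ℤ) (f : RatF F N) : RatF F N :=
  ∑ i : Fin N, Xv F N i ^ n *
    (∏ j ∈ Finset.univ.erase i, (t • Xv F N i - Xv F N j) / (Xv F N i - Xv F N j)) *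
    Γ i f

/-- The operator `𝓜_{a,b}` built from the generalized Schur function
`s_{a,b}(x,y) = (x^{a+1}y^b − y^{a+1}x^b)/(x−y)`:
`𝓜_{a,b} f = Σ_{i<j} s_{a,b}(xᵢ,xⱼ) · Π_{k∉{i,j}} ((t xᵢ−xₖ)(t xⱼ−xₖ))/((xᵢ−xₖ)(xⱼ−xₖ)) · ΓᵢΓⱼ f`. -/
noncomputable def MacPair (F : Type) [Field F] (N : ℕ) (t : F)
    (Γ : Fin N → (RatF F N ≃ₐ[F] RatF F N)) (a b : ℤ) (f : RatF F N) : RatF F N :=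
  ∑ i : Fin N, ∑ j ∈ Finset.univ.filter (fun j : Fin N => i < j),
    ((Xv F N i ^ (a + 1) * Xv F N j ^ b - Xv F N j ^ (a + 1) * Xv F N i ^ b) /
        (Xv F N i - Xv F N j)) *
      (∏ k ∈ (Finset.univ.erase i).erase j,
        ((t • Xv F N i - Xv F N k) * (t • Xv F N j - Xv F N k)) /
          ((Xv F N i - Xv F N k) * (Xv F N j - Xv F N k))) *
      Γ i (Γ j f)

open Finset

def schur {K : Type*} [Field K] (a b : ℤ) (x y : K) : K :=
  (x ^ (a + 1) * y ^ b - y ^ (a + 1) * x ^ b) / (x - y)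

lemma schur_identity {K : Type*} [Field K] (q t : K) (a b : ℤ) {x y : K} (hx : x ≠ 0)
    (hy : y ≠ 0) (hxy : x - y ≠ 0) (hyqx : y - q * x ≠ 0) (hxqy : x - q * y ≠ 0) :
    (x ^ a * y ^ b + x ^ (b - 1) * y ^ (a + 1) - q * (x ^ b * y ^ a)
          - q * (x ^ (a + 1) * y ^ (b - 1)))
        * ((t * x - y) / (x - y) * ((t * y - q * x) / (y - q * x)))
      + (y ^ a * x ^ b + y ^ (b - 1) * x ^ (a + 1) - q * (y ^ b * x ^ a)
          - q * (y ^ (a + 1) * x ^ (b - 1)))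
        * ((t * y - x) / (y - x) * ((t * x - q * y) / (x - q * y)))
    = (1 - q) * t * (schur b a x y - schur (b - 2) (a + 2) x y) := by
  obtain ⟨c, rfl⟩ : ∃ c, b = c + 1 := ⟨b - 1, by ring⟩
  have hyx : y - x ≠ 0 := fun h => hxy (by linear_combination -h)
  rw [schur, schur, show c + 1 - 2 + 1 = c by ring, add_sub_cancel_right,
    show c + 1 + 1 = c + 2 by ring]
  simp only [zpow_add₀ hx, zpow_add₀ hy, zpow_one, zpow_two]
  generalize x ^ a = A, x ^ c = C, y ^ a = A', y ^ c = C'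
  rw [div_mul_div_comm, div_mul_div_comm, ← sub_div, ← mul_div_assoc, ← mul_div_assoc,
    ← mul_div_assoc, div_add_div _ _ (mul_ne_zero hxy hyqx) (mul_ne_zero hyx hxqy),
    div_eq_div_iff (by positivity) hxy]
  ring

lemma sum_sum_eq_sum_add_sum_lt {ι M : Type*} [Fintype ι] [LinearOrder ι] [AddCommMonoid M]
    (g : ι → ι → M) :
    ∑ i, ∑ j, g i j = ∑ i, g i i + ∑ i, ∑ j ∈ univ.filter (i < ·), (g i j + g j i) := by
  have hsplit : ∀ i j, g i j = (if i < j then g i j else 0) + (if i = j then g i j else 0)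
      + (if j < i then g i j else 0) := by
    intro i j
    rcases lt_trichotomy i j with h | rfl | h
    · simp [h, h.ne, h.not_gt]
    · simp
    · simp [h, h.ne', h.not_gt]
  rw [Fintype.sum_congr _ _ fun i => Fintype.sum_congr _ _ (hsplit i)]
  simp only [sum_add_distrib, sum_ite_eq, mem_univ, if_true, sum_filter]
  rw [sum_comm (f := fun i j => if j < i then g i j else 0)]
  abel

variable {F : Type} [Field F] {N : ℕ}

lemma Xv_ne_zero (i : Fin N) : Xv F N i ≠ 0 :=
  (map_ne_zero_iff _ (IsFractionRing.injective _ _)).2 (MvPolynomial.X_ne_zero i)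

lemma Xv_sub_smul_Xv_ne_zero (q : F) {i j : Fin N} (hij : i ≠ j) :
    Xv F N i - q • Xv F N j ≠ 0 := by
  have hpoly : (MvPolynomial.X i - q • MvPolynomial.X j : MvPolynomial (Fin N) F) ≠ 0 := by
    intro h
    simpa [hij.symm] using congrArg (MvPolynomial.eval (Pi.single i 1)) h
  have hsmul : algebraMap _ (RatF F N) (q • MvPolynomial.X j) = q • Xv F N j :=
    map_smul (Algebra.algHom F (MvPolynomial (Fin N) F) (RatF F N)) q (MvPolynomial.X j)
  have := (map_ne_zero_iff _ (IsFractionRing.injective _ (RatF F N))).2 hpoly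
  rwa [map_sub, hsmul] at this

lemma Xv_sub_Xv_ne_zero {i j : Fin N} (hij : i ≠ j) : Xv F N i - Xv F N j ≠ 0 := by
  simpa using Xv_sub_smul_Xv_ne_zero (1 : F) hij

def macCoeff (t : F) (n : ℤ) (i : Fin N) : RatF F N :=
  Xv F N i ^ n * ∏ j ∈ univ.erase i, (t • Xv F N i - Xv F N j) / (Xv F N i - Xv F N j)

lemma macCoeff_eq_of_ne (t : F) (n : ℤ) {i j : Fin N} (hij : i ≠ j) :
    macCoeff t n i = Xv F N i ^ n * ((t • Xv F N i - Xv F N j) / (Xv F N i - Xv F N j) *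
      ∏ k ∈ (univ.erase i).erase j, (t • Xv F N i - Xv F N k) / (Xv F N i - Xv F N k)) := by
  rw [macCoeff, ← mul_prod_erase _ _ (mem_erase.2 ⟨hij.symm, mem_univ j⟩)]

def pairProd (t : F) (i j : Fin N) : RatF F N :=
  ∏ k ∈ (univ.erase i).erase j, ((t • Xv F N i - Xv F N k) * (t • Xv F N j - Xv F N k)) /
    ((Xv F N i - Xv F N k) * (Xv F N j - Xv F N k))

lemma MacPair_eq_sum (t : F) (Γ : Fin N → (RatF F N ≃ₐ[F] RatF F N)) (a b : ℤ) (f : RatF F N) :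
    MacPair F N t Γ a b f = ∑ i, ∑ j ∈ univ.filter (i < ·),
      schur a b (Xv F N i) (Xv F N j) * pairProd t i j * Γ i (Γ j f) :=
  rfl

def qCommCoeff (q t : F) (Γ : Fin N → (RatF F N ≃ₐ[F] RatF F N)) (a b : ℤ) (i j : Fin N) :
    RatF F N :=
  macCoeff t a i * Γ i (macCoeff t b j) - q • (macCoeff t b i * Γ i (macCoeff t a j))

lemma Mac_qComm_eq_sum (q t : F) (Γ : Fin N → (RatF F N ≃ₐ[F] RatF F N)) (a b : ℤ)
    (f : RatF F N) :
    Mac F N t Γ a (Mac F N t Γ b f) - q • Mac F N t Γ b (Mac F N t Γ a f)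
      = ∑ i, ∑ j, qCommCoeff q t Γ a b i j * Γ i (Γ j f) := by
  have hcomp : ∀ m n : ℤ, Mac F N t Γ m (Mac F N t Γ n f)
      = ∑ i, ∑ j, macCoeff t m i * Γ i (macCoeff t n j) * Γ i (Γ j f) := by
    intro m n
    simp only [Mac, map_sum, map_mul, mul_sum, macCoeff, mul_assoc]
  simp only [hcomp, smul_sum, ← sum_sub_distrib, qCommCoeff, sub_mul, smul_mul_assoc]

lemma MacPair_swap (t : F) (Γ : Fin N → (RatF F N ≃ₐ[F] RatF F N)) (a b : ℤ) (f : RatF F N) :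
    MacPair F N t Γ a b f = - MacPair F N t Γ (b - 1) (a + 1) f := by
  simp only [MacPair_eq_sum, ← sum_neg_distrib, schur, sub_add_cancel]
  refine sum_congr rfl fun i _ => sum_congr rfl fun j _ => ?_
  ring

section QShift

variable {q : F} {Γ : Fin N → (RatF F N ≃ₐ[F] RatF F N)}
  (hΓ : ∀ i j : Fin N, Γ i (Xv F N j) = if j = i then q • Xv F N j else Xv F N j)
include hΓ

lemma shift_comm (i j : Fin N) (z : RatF F N) : Γ i (Γ j z) = Γ j (Γ i z) := by
  suffices h : (Γ i).toAlgHom.comp (Γ j).toAlgHom = (Γ j).toAlgHom.comp (Γ i).toAlgHom from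
    DFunLike.congr_fun h z
  refine IsLocalization.algHom_ext (nonZeroDivisors _)
    (MvPolynomial.algHom_ext (σ := Fin N) fun s => ?_)
  change Γ i (Γ j (Xv F N s)) = Γ j (Γ i (Xv F N s))
  rw [hΓ j s, hΓ i s]
  split_ifs <;> subst_vars <;> simp [*]

lemma shift_macCoeff_self (t : F) (n : ℤ) (i : Fin N) :
    Γ i (macCoeff t n i) = q ^ n • (Xv F N i ^ n *
      ∏ j ∈ univ.erase i, (t • q • Xv F N i - Xv F N j) / (q • Xv F N i - Xv F N j)) := by
  have hpow : (q • Xv F N i) ^ n = q ^ n • Xv F N i ^ n := by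
    rw [Algebra.smul_def, Algebra.smul_def, mul_zpow, map_zpow₀]
  rw [macCoeff, map_mul, map_zpow₀, hΓ, if_pos rfl, hpow, smul_mul_assoc, map_prod]
  congr 2
  refine prod_congr rfl fun j hj => ?_
  rw [map_div₀, map_sub, map_sub, map_smul, hΓ i i, if_pos rfl, hΓ i j, if_neg (ne_of_mem_erase hj)]

lemma shift_macCoeff_of_ne (t : F) (n : ℤ) {i j : Fin N} (hij : i ≠ j) :
    Γ i (macCoeff t n j) = Xv F N j ^ n *
      ((t • Xv F N j - q • Xv F N i) / (Xv F N j - q • Xv F N i) *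
        ∏ k ∈ (univ.erase j).erase i, (t • Xv F N j - Xv F N k) / (Xv F N j - Xv F N k)) := by
  rw [macCoeff_eq_of_ne t n hij.symm, map_mul, map_zpow₀, hΓ i j, if_neg hij.symm, map_mul,
    map_prod, map_div₀, map_sub, map_sub, map_smul, hΓ i j, if_neg hij.symm, hΓ i i, if_pos rfl]
  congr 2
  refine prod_congr rfl fun k hk => ?_
  rw [map_div₀, map_sub, map_sub, map_smul, hΓ i j, if_neg hij.symm, hΓ i k,
    if_neg (ne_of_mem_erase hk)]

lemma qCommCoeff_add_qCommCoeff_self (hq : q ≠ 0) (t : F) (a b : ℤ) (i : Fin N) :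
    qCommCoeff q t Γ a b i i + qCommCoeff q t Γ (b - 1) (a + 1) i i = 0 := by
  set R := (∏ j ∈ univ.erase i, (t • Xv F N i - Xv F N j) / (Xv F N i - Xv F N j)) *
    ∏ j ∈ univ.erase i, (t • q • Xv F N i - Xv F N j) / (q • Xv F N i - Xv F N j)
  have hdiag : ∀ m n : ℤ,
      macCoeff t m i * Γ i (macCoeff t n i) = q ^ n • (Xv F N i ^ (m + n) * R) := by
    intro m n
    rw [shift_macCoeff_self hΓ, macCoeff, mul_smul_comm, zpow_add₀ (Xv_ne_zero i)]
    simp only [R]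
    congr 1
    ring
  have hqa : q ^ (a + 1) = q * q ^ a := by rw [zpow_add_one₀ hq, mul_comm]
  have hqb : q ^ b = q * q ^ (b - 1) := by rw [← zpow_one_add₀ hq, add_sub_cancel]
  simp only [qCommCoeff, hdiag, hqa, hqb, show b - 1 + (a + 1) = a + b by ring,
    show a + 1 + (b - 1) = a + b by ring, add_comm b a]
  module

lemma qCommCoeff_offDiag (t : F) (a b : ℤ) {i j : Fin N} (hij : i ≠ j) :
    (qCommCoeff q t Γ a b i j + qCommCoeff q t Γ (b - 1) (a + 1) i j)
      + (qCommCoeff q t Γ a b j i + qCommCoeff q t Γ (b - 1) (a + 1) j i)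
    = ((1 - q) * t) • ((schur b a (Xv F N i) (Xv F N j)
        - schur (b - 2) (a + 2) (Xv F N i) (Xv F N j)) * pairProd t i j) := by
  have hP : pairProd t i j
      = (∏ k ∈ (univ.erase i).erase j, (t • Xv F N i - Xv F N k) / (Xv F N i - Xv F N k)) *
        ∏ k ∈ (univ.erase j).erase i, (t • Xv F N j - Xv F N k) / (Xv F N j - Xv F N k) := by
    rw [pairProd, erase_right_comm (a := j), ← prod_mul_distrib]
    exact prod_congr rfl fun k _ => (div_mul_div_comm _ _ _ _).symm
  have hyqx : Xv F N j - algebraMap F _ q * Xv F N i ≠ 0 := by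
    simpa only [Algebra.smul_def] using Xv_sub_smul_Xv_ne_zero q hij.symm
  have hxqy : Xv F N i - algebraMap F _ q * Xv F N j ≠ 0 := by
    simpa only [Algebra.smul_def] using Xv_sub_smul_Xv_ne_zero q hij
  have key := schur_identity (algebraMap F (RatF F N) q) (algebraMap F _ t) a b (Xv_ne_zero i)
    (Xv_ne_zero j) (Xv_sub_Xv_ne_zero hij) hyqx hxqy
  simp only [qCommCoeff, shift_macCoeff_of_ne hΓ _ _ hij, shift_macCoeff_of_ne hΓ _ _ hij.symm]
  simp only [macCoeff_eq_of_ne _ _ hij, macCoeff_eq_of_ne _ _ hij.symm, hP]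
  generalize ∏ k ∈ (univ.erase i).erase j, (t • Xv F N i - Xv F N k) / (Xv F N i - Xv F N k) = Pi
  generalize ∏ k ∈ (univ.erase j).erase i, (t • Xv F N j - Xv F N k) / (Xv F N j - Xv F N k) = Pj
  simp only [Algebra.smul_def, map_mul, map_sub, map_one]
  linear_combination Pi * Pj * key

lemma qComm_add_qComm_eq_MacPair_sub (hq : q ≠ 0) (t : F) (a b : ℤ) (f : RatF F N) :
    (Mac F N t Γ a (Mac F N t Γ b f) - q • Mac F N t Γ b (Mac F N t Γ a f))
      + (Mac F N t Γ (b - 1) (Mac F N t Γ (a + 1) f)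
        - q • Mac F N t Γ (a + 1) (Mac F N t Γ (b - 1) f))
    = ((1 - q) * t) • (MacPair F N t Γ b a f - MacPair F N t Γ (b - 2) (a + 2) f) := by
  simp only [Mac_qComm_eq_sum, ← sum_add_distrib, ← add_mul]
  rw [sum_sum_eq_sum_add_sum_lt, sum_eq_zero fun i _ => by
    rw [qCommCoeff_add_qCommCoeff_self hΓ hq, zero_mul], zero_add, MacPair_eq_sum, MacPair_eq_sum]
  simp only [← sum_sub_distrib, smul_sum]
  refine sum_congr rfl fun i _ => sum_congr rfl fun j hj => ?_
  rw [shift_comm hΓ j i, ← add_mul, qCommCoeff_offDiag hΓ t a b (mem_filter.1 hj).2.ne,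
    smul_mul_assoc]
  congr 1
  ring

lemma sum_range_qComm_eq_MacPair_sub (hq : q ≠ 0) (t : F) (m n : ℤ) (k : ℕ) (f : RatF F N) :
    ∑ l ∈ range k,
        ((Mac F N t Γ (n + 2 * l) (Mac F N t Γ (m - 2 * l) f)
            - q • Mac F N t Γ (m - 2 * l) (Mac F N t Γ (n + 2 * l) f))
          + (Mac F N t Γ (m - 1 - 2 * l) (Mac F N t Γ (n + 2 * l + 1) f)
            - q • Mac F N t Γ (n + 2 * l + 1) (Mac F N t Γ (m - 1 - 2 * l) f)))
      = ((1 - q) * t) • (MacPair F N t Γ m n f - MacPair F N t Γ (m - 2 * k) (n + 2 * k) f) := by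
  have htel := sum_range_sub' (fun l : ℕ => MacPair F N t Γ (m - 2 * l) (n + 2 * l) f) k
  simp only [Nat.cast_zero, mul_zero, sub_zero, add_zero] at htel
  rw [← htel, smul_sum]
  refine sum_congr rfl fun l _ => ?_
  convert qComm_add_qComm_eq_MacPair_sub hΓ hq t (n + 2 * l) (m - 2 * l) f using 3 <;>
    push_cast <;> ring_nf

end QShift

theorem statement11_general (F : Type) [Field F] (q t : F) (hq : q ≠ 0)
    (N : ℕ)
    (Γ : Fin N → (RatF F N ≃ₐ[F] RatF F N))
    (hΓ : ∀ i j : Fin N, Γ i (Xv F N j) = if j = i then q • Xv F N j else Xv F N j)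
    (n : ℤ) (k : ℕ) (f : RatF F N) :
    (((1 - q) * t) • (MacPair F N t Γ (n + 4 * k) n f - MacPair F N t Γ (n + 2 * k) (n + 2 * k) f)
      = ∑ l ∈ Finset.range k,
          ((Mac F N t Γ (n + 2 * l) (Mac F N t Γ (n + 4 * k - 2 * l) f)
              - q • Mac F N t Γ (n + 4 * k - 2 * l) (Mac F N t Γ (n + 2 * l) f))
            + (Mac F N t Γ (n + 4 * k - 1 - 2 * l) (Mac F N t Γ (n + 2 * l + 1) f)
              - q • Mac F N t Γ (n + 2 * l + 1) (Mac F N t Γ (n + 4 * k - 1 - 2 * l) f)))) ∧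
    (((1 - q) * t) • (MacPair F N t Γ (n + 4 * k + 2) n f
          + MacPair F N t Γ (n + 2 * k + 1) (n + 2 * k + 1) f)
      = ∑ l ∈ Finset.range (k + 1),
          ((Mac F N t Γ (n + 2 * l) (Mac F N t Γ (n + 4 * k + 2 - 2 * l) f)
              - q • Mac F N t Γ (n + 4 * k + 2 - 2 * l) (Mac F N t Γ (n + 2 * l) f))
            + (Mac F N t Γ (n + 4 * k + 1 - 2 * l) (Mac F N t Γ (n + 2 * l + 1) f)
              - q • Mac F N t Γ (n + 2 * l + 1) (Mac F N t Γ (n + 4 * k + 1 - 2 * l) f)))) := by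
  constructor
  · rw [sum_range_qComm_eq_MacPair_sub hΓ hq, show n + 4 * (k : ℤ) - 2 * k = n + 2 * k by ring]
  · have hodd : ∀ l : ℕ, n + 4 * (k : ℤ) + 1 - 2 * l = n + 4 * k + 2 - 1 - 2 * l := fun l => by ring
    simp only [hodd]
    rw [sum_range_qComm_eq_MacPair_sub hΓ hq, MacPair_swap t Γ (n + 4 * k + 2 - 2 * _),
      sub_neg_eq_add]
    congr 3 <;> push_cast <;> ring

/-- the two identities
`(1−q)t(𝓜_{n+4k,n} − 𝓜_{n+2k,n+2k}) = Σ_{ℓ=0}^{k−1}([𝓜_{n+2ℓ},𝓜_{n+4k−2ℓ}]_q + [𝓜_{n+4k−1−2ℓ},𝓜_{n+2ℓ+1}]_q)`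
and
`(1−q)t(𝓜_{n+4k+2,n} + 𝓜_{n+2k+1,n+2k+1}) = Σ_{ℓ=0}^{k}([𝓜_{n+2ℓ},𝓜_{n+4k+2−2ℓ}]_q + [𝓜_{n+4k+1−2ℓ},𝓜_{n+2ℓ+1}]_q)`,
where `[X,Y]_q = X∘Y − q·Y∘X`. -/
theorem statement11 (F : Type) [Field F] [CharZero F] (q t : F) (hq : q ≠ 0) (ht : t ≠ 0)
    (N : ℕ) (hN : 1 ≤ N)
    (Γ : Fin N → (RatF F N ≃ₐ[F] RatF F N))
    (hΓ : ∀ i j : Fin N, Γ i (Xv F N j) = if j = i then q • Xv F N j else Xv F N j)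
    (n : ℤ) (k : ℕ) (f : RatF F N) :
    (((1 - q) * t) • (MacPair F N t Γ (n + 4 * k) n f - MacPair F N t Γ (n + 2 * k) (n + 2 * k) f)
      = ∑ l ∈ Finset.range k,
          ((Mac F N t Γ (n + 2 * l) (Mac F N t Γ (n + 4 * k - 2 * l) f)
              - q • Mac F N t Γ (n + 4 * k - 2 * l) (Mac F N t Γ (n + 2 * l) f))
            + (Mac F N t Γ (n + 4 * k - 1 - 2 * l) (Mac F N t Γ (n + 2 * l + 1) f)
              - q • Mac F N t Γ (n + 2 * l + 1) (Mac F N t Γ (n + 4 * k - 1 - 2 * l) f)))) ∧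
    (((1 - q) * t) • (MacPair F N t Γ (n + 4 * k + 2) n f
          + MacPair F N t Γ (n + 2 * k + 1) (n + 2 * k + 1) f)
      = ∑ l ∈ Finset.range (k + 1),
          ((Mac F N t Γ (n + 2 * l) (Mac F N t Γ (n + 4 * k + 2 - 2 * l) f)
              - q • Mac F N t Γ (n + 4 * k + 2 - 2 * l) (Mac F N t Γ (n + 2 * l) f))
            + (Mac F N t Γ (n + 4 * k + 1 - 2 * l) (Mac F N t Γ (n + 2 * l + 1) f)
              - q • Mac F N t Γ (n + 2 * l + 1) (Mac F N t Γ (n + 4 * k + 1 - 2 * l) f)))) :=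
  statement11_general F q t hq N Γ hΓ n k f
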